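/- Every parallel reduction step is a β-reduction sequence: for any marking M^X of an FMC term M, the term M β-reduces in zero or more steps to the marked reduct (M^X)_X. -/

import Mathlib

/-- Terms of the Functional Machine Calculus over a set `A` of locations,
in de Bruijn representation (so terms are automatically identified up to
α-equivalence): nil, variable prefix, push/application on a location,
and pop/abstraction on a location. -/
inductive Tm (A : Type) : Type
  | star : Tm A
  | var  : Nat → Tm A → Tm A
  | push : Tm A → A → Tm A → Tm A
  | pop  : A → Tm A → Tm A

namespace Tm

variable {A : Type}

/-- Lifting of a renaming under a binder. -/
def liftF (f : Nat → Nat) : Nat → Nat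
  | 0 => 0
  | n+1 => f n + 1

/-- Renaming of de Bruijn indices. -/
def rename (f : Nat → Nat) : Tm A → Tm A
  | star => star
  | var n M => var (f n) (rename f M)
  | push N a M => push (rename f N) a (rename f M)
  | pop a M => pop a (rename (liftF f) M)

/-- Capture-avoiding composition `N ; M`. -/
def comp : Tm A → Tm A → Tm A
  | star, P => P
  | var n N, P => var n (comp N P)
  | push Q a N, P => push Q a (comp N P)
  | pop a N, P => pop a (comp N (rename Nat.succ P))

/-- Lifting of a substitution under a binder. -/
def liftS (σ : Nat → Tm A) : Nat → Tm A
  | 0 => var 0 star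
  | n+1 => rename Nat.succ (σ n)

/-- Capture-avoiding simultaneous substitution; note
`{N/x}(x.M) = N ; {N/x}M`. -/
def subst (σ : Nat → Tm A) : Tm A → Tm A
  | star => star
  | var n M => comp (σ n) (subst σ M)
  | push N a M => push (subst σ N) a (subst σ M)
  | pop a M => pop a (subst (liftS σ) M)

/-- Capture-avoiding substitution `{N/x}M` of `N` for the variable
bound immediately outside `M`. -/
def subst1 (N : Tm A) : Tm A → Tm A :=
  subst (fun n => match n with | 0 => N | n+1 => var n star)

end Tm

/-- Head contexts `H ::= {} | [M]a.H | a<x>.H`. -/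
inductive Hd (A : Type) : Type
  | hole : Hd A
  | push : Tm A → A → Hd A → Hd A
  | pop  : A → Hd A → Hd A

namespace Hd

variable {A : Type}

/-- Plugging a term into the hole of a head context (binders of `H` capture). -/
def plug : Hd A → Tm A → Tm A
  | hole, M => M
  | push N a H, M => Tm.push N a (plug H M)
  | pop a H, M => Tm.pop a (plug H M)

/-- The number of binders of a head context. -/
def binders : Hd A → Nat
  | hole => 0
  | push _ _ H => binders H
  | pop _ H => binders H + 1

/-- The locations occurring along the spine of a head context. -/
def locs : Hd A → List A
  | hole => []
  | push _ a H => a :: locs H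
  | pop a H => a :: locs H

end Hd

mutual
/-- Redex-marked FMC terms: a term together with a selection of marked
β-redexes, represented by the `redex` constructor `[N]a✓.H.✓a<x>.M`. -/
inductive MTm (A : Type) : Type
  | star : MTm A
  | var  : Nat → MTm A → MTm A
  | push : MTm A → A → MTm A → MTm A
  | pop  : A → MTm A → MTm A
  | redex : MTm A → A → MHd A → MTm A → MTm A
/-- Head contexts of redex-marked terms. -/
inductive MHd (A : Type) : Type
  | hole : MHd A
  | push : MTm A → A → MHd A → MHd A
  | pop  : A → MHd A → MHd A
end

namespace MHd
variable {A : Type}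
/-- The number of binders of a marked head context. -/
def binders : MHd A → Nat
  | hole => 0
  | push _ _ H => binders H
  | pop _ H => binders H + 1
/-- The locations occurring along the spine of a marked head context. -/
def locs : MHd A → List A
  | hole => []
  | push _ a H => a :: locs H
  | pop a H => a :: locs H
end MHd

mutual
/-- Well-formedness of a marked term: every marked redex is a genuine
β-redex, i.e. its location does not occur in the intervening head context
(in de Bruijn style the freshness condition on binders is automatic). -/
def MTm.WF {A : Type} : MTm A → Prop
  | .star => True
  | .var _ M => M.WF
  | .push N _ M => N.WF ∧ M.WF
  | .pop _ M => M.WF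
  | .redex N a H M => a ∉ H.locs ∧ N.WF ∧ H.WF ∧ M.WF
def MHd.WF {A : Type} : MHd A → Prop
  | .hole => True
  | .push N _ H => N.WF ∧ H.WF
  | .pop _ H => H.WF
end

mutual
/-- The underlying (unmarked) term of a marked term. -/
def MTm.erase {A : Type} : MTm A → Tm A
  | .star => .star
  | .var n M => .var n M.erase
  | .push N a M => .push N.erase a M.erase
  | .pop a M => .pop a M.erase
  | .redex N a H M => .push N.erase a (H.erase.plug (.pop a M.erase))
/-- The underlying head context of a marked head context. -/
def MHd.erase {A : Type} : MHd A → Hd A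
  | .hole => .hole
  | .push N a H => .push N.erase a H.erase
  | .pop a H => .pop a H.erase
end

mutual
/-- The marked reduct `(M^X)_X`: the simultaneous contraction of all
marked redexes. -/
def MTm.reduct {A : Type} : MTm A → Tm A
  | .star => .star
  | .var n M => .var n M.reduct
  | .push N a M => .push N.reduct a M.reduct
  | .pop a M => .pop a M.reduct
  | .redex N _ H M =>
      H.reduct.plug (Tm.subst1 (Tm.rename (· + H.reduct.binders) N.reduct) M.reduct)
/-- The marked reduct of a marked head context. -/
def MHd.reduct {A : Type} : MHd A → Hd A
  | .hole => .hole
  | .push N a H => .push N.reduct a H.reduct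
  | .pop a H => .pop a H.reduct
end

/-- β-reduction of the FMC: `[N]a.H.a<x>.M → H.{N/x}M` where the location `a`
does not occur in `H` (in de Bruijn style no binding variable of `H` can
capture in `N`, which is shifted by the number of binders of `H`),
closed under all contexts. -/
inductive Step {A : Type} : Tm A → Tm A → Prop
  | beta (N : Tm A) (a : A) (H : Hd A) (M : Tm A) (h : a ∉ H.locs) :
      Step (Tm.push N a (H.plug (Tm.pop a M)))
           (H.plug (Tm.subst1 (Tm.rename (· + H.binders) N) M))
  | var {M M' : Tm A} (n : Nat) : Step M M' → Step (Tm.var n M) (Tm.var n M')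
  | pushL {M M' : Tm A} (N : Tm A) (a : A) : Step M M' → Step (Tm.push N a M) (Tm.push N a M')
  | pushArg {N N' : Tm A} (a : A) (M : Tm A) : Step N N' → Step (Tm.push N a M) (Tm.push N' a M)
  | pop {M M' : Tm A} (a : A) : Step M M' → Step (Tm.pop a M) (Tm.pop a M')

/-!
Contract the marked redexes innermost first. By mutual induction on the marking, the argument `N`,
the head context `H` and the body `M` of a marked redex `[N]a.H.a<x>.M` reduce to their marked
reducts; the redex that remains is then contracted by one β-step, whose side condition `a ∉ H`
survives because taking reducts does not change the locations of a head context.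
-/

local infix:50 " ↠β " => Relation.ReflTransGen Step

namespace Step

variable {A : Type}

theorem plug (H : Hd A) {M M' : Tm A} (h : Step M M') : Step (H.plug M) (H.plug M') := by
  induction H with
  | hole => exact h
  | push N a H ih => exact pushL N a ih
  | pop a H ih => exact pop a ih

theorem reflTransGen_var (n : Nat) {M M' : Tm A} (h : M ↠β M') : Tm.var n M ↠β Tm.var n M' :=
  h.lift (Tm.var n) fun _ _ => var n

theorem reflTransGen_pop (a : A) {M M' : Tm A} (h : M ↠β M') : Tm.pop a M ↠β Tm.pop a M' :=
  h.lift (Tm.pop a) fun _ _ => pop a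

theorem reflTransGen_push (a : A) {N N' M M' : Tm A} (hN : N ↠β N') (hM : M ↠β M') :
    Tm.push N a M ↠β Tm.push N' a M' :=
  (hN.lift (Tm.push · a M) fun _ _ => pushArg a M).trans
    (hM.lift (Tm.push N' a) fun _ _ => pushL N' a)

theorem reflTransGen_plug (H : Hd A) {M M' : Tm A} (h : M ↠β M') : H.plug M ↠β H.plug M' :=
  h.lift H.plug fun _ _ => plug H

end Step

theorem MHd.locs_reduct {A : Type} : ∀ H : MHd A, H.reduct.locs = H.locs
  | .hole => rfl
  | .push _ a H => congrArg (a :: ·) H.locs_reduct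
  | .pop a H => congrArg (a :: ·) H.locs_reduct

mutual

theorem MTm.erase_reflTransGen_reduct {A : Type} :
    ∀ W : MTm A, W.WF → W.erase ↠β W.reduct
  | .star, _ => .refl
  | .var n M, hM => Step.reflTransGen_var n (M.erase_reflTransGen_reduct hM)
  | .push N a M, ⟨hN, hM⟩ =>
    Step.reflTransGen_push a (N.erase_reflTransGen_reduct hN) (M.erase_reflTransGen_reduct hM)
  | .pop a M, hM => Step.reflTransGen_pop a (M.erase_reflTransGen_reduct hM)
  | .redex N a H M, ⟨ha, hN, hH, hM⟩ => by
    have inner : (MTm.redex N a H M).erase ↠β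
        Tm.push N.reduct a (H.reduct.plug (Tm.pop a M.reduct)) :=
      Step.reflTransGen_push a (N.erase_reflTransGen_reduct hN) <|
        (Step.reflTransGen_plug H.erase <|
          Step.reflTransGen_pop a (M.erase_reflTransGen_reduct hM)).trans
        (H.plug_erase_reflTransGen_plug_reduct hH _)
    have outer := Step.beta N.reduct a H.reduct M.reduct (H.locs_reduct ▸ ha)
    exact inner.tail outer

theorem MHd.plug_erase_reflTransGen_plug_reduct {A : Type} :
    ∀ H : MHd A, H.WF → ∀ M : Tm A, H.erase.plug M ↠β H.reduct.plug M
  | .hole, _, _ => .refl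
  | .push N a H, ⟨hN, hH⟩, M =>
    Step.reflTransGen_push a (N.erase_reflTransGen_reduct hN)
      (H.plug_erase_reflTransGen_plug_reduct hH M)
  | .pop a H, hH, M => Step.reflTransGen_pop a (H.plug_erase_reflTransGen_plug_reduct hH M)

end

/-- Every parallel reduction step is a β-reduction sequence: a term
β-reduces in zero or more steps to the marked reduct of any of its
markings. -/
theorem fmc_par_is_beta {A : Type} (W : MTm A) (hW : W.WF) :
    Relation.ReflTransGen Step W.erase W.reduct :=
  W.erase_reflTransGen_reduct hW
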